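/- Let n,d,k be positive integers with d ≤ n. Then H_SR^R(n,d,k) = H_SR(n,d,k), and this common value equals 1 if d=1, equals d if k=1, and equals n if k>1 and d>1. -/
import Mathlib


open scoped Classical
noncomputable section

/-- Attributes are natural numbers. -/
abbrev Attr := ℕ
/-- A value in an equation system: `some δ` is a number, `none` is the special symbol `*`. -/
abbrev Val := Option ℕ
/-- A decision rule: left-hand side (set of equations attribute = numeric value) and
right-hand side (decision). -/
abbrev Rule := Finset (Attr × ℕ) × ℕ
/-- An equation system over attributes with possibly `*` values. -/
abbrev EqSys := Finset (Attr × Val)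
/-- A decision rule system. -/
abbrev DRS := Finset Rule

/-- The equation system `K(r)` of a rule. -/
def Kr (r : Rule) : EqSys := r.1.image fun p => (p.1, some p.2)
/-- The set `A(r)` of attributes of a rule. -/
def Ar (r : Rule) : Finset Attr := r.1.image Prod.fst
/-- The length of a rule. -/
def ruleLen (r : Rule) : ℕ := r.1.card
/-- Well-formed rule: attributes in the left-hand side are pairwise different. -/
def WFRule (r : Rule) : Prop := ∀ p ∈ r.1, ∀ q ∈ r.1, p.1 = q.1 → p.2 = q.2
/-- Well-formed decision rule system: a finite nonempty set of well-formed rules. -/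
def WFS (S : DRS) : Prop := S.Nonempty ∧ ∀ r ∈ S, WFRule r

/-- `A(S)`: attributes of a system. -/
def AS (S : DRS) : Finset Attr := S.biUnion Ar
/-- `n(S) = |A(S)|`. -/
def nS (S : DRS) : ℕ := (AS S).card
/-- `d(S)`: the maximum length of a rule in `S`. -/
def dS (S : DRS) : ℕ := S.sup ruleLen
/-- `V_S(a)`: values of attribute `a` occurring in `S`. -/
def VS (S : DRS) (a : Attr) : Finset ℕ :=
  S.biUnion fun r => (r.1.filter fun p => p.1 = a).image Prod.snd
/-- `k(S)`: maximum number of values of a single attribute. -/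
def kS (S : DRS) : ℕ := (AS S).sup fun a => (VS S a).card

/-- Branching sets of o-decision trees: `V_S(a)`. -/
def Bo (S : DRS) (a : Attr) : Finset Val := (VS S a).image some
/-- Branching sets of e-decision trees: `EV_S(a) = V_S(a) ∪ {*}`. -/
def Be (S : DRS) (a : Attr) : Finset Val := insert none (Bo S a)

/-- Consistency of an equation system. -/
def Consistent (K : EqSys) : Prop := ∀ p ∈ K, ∀ q ∈ K, p.1 = q.1 → p.2 = q.2

/-- Decision trees: terminal nodes labeled with sets of rules, working nodes labeled
with an attribute and having a child for each possible value (only children whose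
labels lie in the relevant branching set are meaningful). -/
inductive DTree where
  | leaf : DRS → DTree
  | node : Attr → (Val → DTree) → DTree

/-- Depth of a decision tree with respect to branching sets `B`. -/
def depthT (B : Attr → Finset Val) : DTree → ℕ
  | .leaf _ => 0
  | .node a c => ((B a).sup fun v => depthT B (c v)) + 1

/-- A decision tree over a system `S` (with branching sets `B`). -/
def TreeOver (B : Attr → Finset Val) (S : DRS) : DTree → Prop
  | .leaf Z => Z ⊆ S
  | .node a c => a ∈ AS S ∧ ∀ v ∈ B a, TreeOver B S (c v)

/-- `PathT B Γ K Z`: there is a complete path in `Γ` (following edges with labels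
in the branching sets `B`) with equation system `K` and terminal label `Z`. -/
inductive PathT (B : Attr → Finset Val) : DTree → EqSys → DRS → Prop
  | leaf (Z : DRS) : PathT B (.leaf Z) ∅ Z
  | node (a : Attr) (c : Val → DTree) (v : Val) (K : EqSys) (Z : DRS) :
      v ∈ B a → PathT B (c v) K Z → PathT B (.node a c) (insert (a, v) K) Z

/-- `Γ` solves the problem given by correctness condition `cond` on (K(ξ), τ(ξ)). -/
def Solves (cond : EqSys → DRS → Prop) (B : Attr → Finset Val) (Γ : DTree) : Prop :=
  ∀ K Z, PathT B Γ K Z → Consistent K → cond K Z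

/-- Correctness condition for the All Rules problem. -/
def CondAR (S : DRS) (K : EqSys) (Z : DRS) : Prop :=
  (∀ r ∈ Z, Kr r ⊆ K) ∧ ∀ r ∈ S, r ∉ Z → ¬ Consistent (Kr r ∪ K)
/-- Correctness condition for the All Decisions problem. -/
def CondAD (S : DRS) (K : EqSys) (Z : DRS) : Prop :=
  (∀ r ∈ Z, Kr r ⊆ K) ∧ ∀ r ∈ S, r.2 ∉ Z.image Prod.snd → ¬ Consistent (Kr r ∪ K)
/-- Correctness condition for the Some Rules problem. -/
def CondSR (S : DRS) (K : EqSys) (Z : DRS) : Prop :=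
  (∀ r ∈ Z, Kr r ⊆ K) ∧ (Z = ∅ → ∀ r ∈ S, ¬ Consistent (Kr r ∪ K))

/-- Minimum depth of a decision tree over `S` solving the given problem. -/
def hgen (cond : DRS → EqSys → DRS → Prop) (B : DRS → Attr → Finset Val) (S : DRS) : ℕ :=
  sInf {m | ∃ Γ, TreeOver (B S) S Γ ∧ Solves (cond S) (B S) Γ ∧ depthT (B S) Γ = m}

def hAR (S : DRS) : ℕ := hgen CondAR Bo S
def hEAR (S : DRS) : ℕ := hgen CondAR Be S
def hAD (S : DRS) : ℕ := hgen CondAD Bo S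
def hEAD (S : DRS) : ℕ := hgen CondAD Be S
def hSR (S : DRS) : ℕ := hgen CondSR Bo S
def hESR (S : DRS) : ℕ := hgen CondSR Be S

/-- SR-reduced system. -/
def SRred (S : DRS) : Prop := ∀ r ∈ S, ¬ ∃ r' ∈ S, r'.1 ⊂ r.1
/-- AD-reduced system. -/
def ADred (S : DRS) : Prop := ∀ r ∈ S, ¬ ∃ r' ∈ S, r'.1 ⊂ r.1 ∧ r'.2 = r.2
/-- `R_SR(S)`. -/
def RSR (S : DRS) : DRS := S.filter fun r => ¬ ∃ r' ∈ S, r'.1 ⊂ r.1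
/-- `R_AD(S)`. -/
def RAD (S : DRS) : DRS := S.filter fun r => ¬ ∃ r' ∈ S, r'.1 ⊂ r.1 ∧ r'.2 = r.2

/-- `h_C(n,d,k)`: minimum of `h S` over systems with the given parameters. -/
def hmin (h : DRS → ℕ) (n d k : ℕ) : ℕ :=
  sInf {m | ∃ S, WFS S ∧ nS S = n ∧ dS S = d ∧ kS S = k ∧ h S = m}
/-- `H_C(n,d,k)`: maximum of `h S` over systems with the given parameters. -/
def Hmax (h : DRS → ℕ) (n d k : ℕ) : ℕ :=
  sSup {m | ∃ S, WFS S ∧ nS S = n ∧ dS S = d ∧ kS S = k ∧ h S = m}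
/-- `h_C^R(n,d,k)`: minimum of `h S` over reduced systems (`P`) with given parameters. -/
def hminR (h : DRS → ℕ) (P : DRS → Prop) (n d k : ℕ) : ℕ :=
  sInf {m | ∃ S, WFS S ∧ P S ∧ nS S = n ∧ dS S = d ∧ kS S = k ∧ h S = m}
/-- `H_C^R(n,d,k)`: maximum of `h S` over reduced systems (`P`) with given parameters. -/
def HmaxR (h : DRS → ℕ) (P : DRS → Prop) (n d k : ℕ) : ℕ :=
  sSup {m | ∃ S, WFS S ∧ P S ∧ nS S = n ∧ dS S = d ∧ kS S = k ∧ h S = m}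

/-- Node cover of the hypergraph `G(S)`. -/
def NodeCover (S : DRS) (B : Finset Attr) : Prop :=
  B ⊆ AS S ∧ ∀ r ∈ S, Ar r ≠ ∅ → (Ar r ∩ B).Nonempty
/-- `β(S)`: minimum cardinality of a node cover of `G(S)`. -/
def nodeCoverNum (S : DRS) : ℕ := sInf {m | ∃ B, NodeCover S B ∧ B.card = m}

/-- `I_SR(S)`. -/
def ISR (S : DRS) : DRS := if ∀ r ∈ S, r.1 ≠ ∅ then S else S.filter fun r => r.1 = ∅
/-- `D_0(S)`: right-hand sides of length-0 rules. -/
def D0 (S : DRS) : Finset ℕ := (S.filter fun r => r.1 = ∅).image Prod.snd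
/-- `I_AD(S)`. -/
def IAD (S : DRS) : DRS := S.filter fun r => r.1 = ∅ ∨ r.2 ∉ D0 S

/-- `K(S, δ̄)` for an assignment `f` of numeric values to all attributes of `S`. -/
def KStuple (S : DRS) (f : Attr → ℕ) : EqSys := (AS S).image fun a => (a, some (f a))
/-- An incomplete decision rule system. -/
def IncompleteS (S : DRS) : Prop :=
  ∃ f : Attr → ℕ, (∀ a ∈ AS S, f a ∈ VS S a) ∧ ∀ r ∈ S, ¬ Consistent (Kr r ∪ KStuple S f)

/-- `r_α`: remove from the left-hand side of `r` all equations belonging to `α`. -/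
def resRule (α : EqSys) (r : Rule) : Rule :=
  (r.1.filter fun p => (p.1, (some p.2 : Val)) ∉ α, r.2)
/-- `S_α`: rules `r_α` for the rules `r ∈ S` with `K(r) ∪ α` consistent. -/
def Sres (α : EqSys) (S : DRS) : DRS :=
  (S.filter fun r => Consistent (Kr r ∪ α)).image (resRule α)

/-- Value chosen at a node labeled by an attribute `a ∉ A(S_α)` when building `Γ_α`:
the `α`-value of `a` if `a` occurs in `α`, and the minimum number of `V_S(a)` otherwise. -/
def chooseVal (α : EqSys) (S : DRS) (a : Attr) : Val :=
  if h : ∃ v, (a, v) ∈ α then Classical.choose h else some (sInf {n : ℕ | n ∈ VS S a})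

/-- The decision tree `Γ_α`. -/
def resTree (α : EqSys) (S : DRS) : DTree → DTree
  | .leaf Z => .leaf (Sres α Z)
  | .node a c =>
      if a ∈ AS (Sres α S) then .node a fun v => resTree α S (c v)
      else resTree α S (c (chooseVal α S a))

/-- The o-decision tree `o(Γ)`: remove all nodes reachable only via an edge labeled `*`. -/
def oTree : DTree → DTree
  | .leaf Z => .leaf Z
  | .node a c => .node a fun v => match v with
      | none => .leaf ∅
      | some x => oTree (c (some x))
/-! ### Auxiliary lemmas -/

section Aux

lemma mem_AS_iff {S : DRS} {a : Attr} : a ∈ AS S ↔ ∃ r ∈ S, a ∈ Ar r := by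
  simp [AS]

lemma mem_Ar_iff {r : Rule} {a : Attr} : a ∈ Ar r ↔ ∃ p ∈ r.1, p.1 = a := by
  simp [Ar]

lemma mem_VS_of {S : DRS} {r : Rule} {a : Attr} {w : ℕ} (hr : r ∈ S)
    (hw : (a, w) ∈ r.1) : w ∈ VS S a := by
  simp only [VS, Finset.mem_biUnion]
  exact ⟨r, hr, by simp only [Finset.mem_image, Finset.mem_filter]; exact ⟨(a,w), ⟨hw, rfl⟩, rfl⟩⟩

lemma exists_rule_of_mem_VS {S : DRS} {a : Attr} {u : ℕ} (hu : u ∈ VS S a) :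
    ∃ r ∈ S, (a, u) ∈ r.1 := by
  simp only [VS, Finset.mem_biUnion, Finset.mem_image, Finset.mem_filter] at hu
  obtain ⟨r, hr, p, ⟨hp, hpa⟩, hpu⟩ := hu
  exact ⟨r, hr, by rw [← hpa, ← hpu]; exact hp⟩

lemma mem_Bo_iff {S : DRS} {a : Attr} {v : Val} :
    v ∈ Bo S a ↔ ∃ u ∈ VS S a, v = some u := by
  simp [Bo, eq_comm]

lemma VS_nonempty_of_mem_AS {S : DRS} {a : Attr} (ha : a ∈ AS S) : (VS S a).Nonempty := by
  obtain ⟨r, hr, har⟩ := mem_AS_iff.mp ha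
  obtain ⟨p, hp, hpa⟩ := mem_Ar_iff.mp har
  exact ⟨p.2, mem_VS_of hr (by rw [← hpa]; exact hp)⟩

lemma Bo_nonempty_of_mem_AS {S : DRS} {a : Attr} (ha : a ∈ AS S) : (Bo S a).Nonempty := by
  obtain ⟨u, hu⟩ := VS_nonempty_of_mem_AS ha
  exact ⟨some u, mem_Bo_iff.mpr ⟨u, hu, rfl⟩⟩

lemma mem_Kr_iff {r : Rule} {q : Attr × Val} :
    q ∈ Kr r ↔ ∃ p ∈ r.1, q = (p.1, some p.2) := by
  simp [Kr, eq_comm]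

lemma card_Kr (r : Rule) : (Kr r).card = r.1.card := by
  apply Finset.card_image_of_injective
  intro p q h
  simp only [Prod.mk.injEq, Option.some.injEq] at h
  exact Prod.ext h.1 h.2

end Aux

section Trees

/-- A generic querying tree: ask the attributes in `l` in order, accumulating equations,
and label the leaf using `F` applied to the accumulated system. -/
def qTree (F : EqSys → DRS) : List Attr → EqSys → DTree
  | [], K => .leaf (F K)
  | a :: l, K => .node a (fun v => qTree F l (insert (a, v) K))

lemma depth_qTree {B : Attr → Finset Val} {F : EqSys → DRS} :
    ∀ (l : List Attr) (K₀ : EqSys), (∀ a ∈ l, (B a).Nonempty) →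
      depthT B (qTree F l K₀) = l.length := by
  intro l
  induction l with
  | nil => intro K₀ _; rfl
  | cons a l ih =>
    intro K₀ hne
    have hBa : (B a).Nonempty := hne a (by simp)
    simp only [qTree, depthT, List.length_cons]
    congr 1
    have : ∀ v, depthT B (qTree F l (insert (a, v) K₀)) = l.length := fun v =>
      ih _ (fun b hb => hne b (by simp [hb]))
    rw [Finset.sup_congr rfl (fun v _ => this v)]
    exact Finset.sup_const hBa _

lemma treeOver_qTree {B : Attr → Finset Val} {F : EqSys → DRS} {S : DRS} :
    ∀ (l : List Attr) (K₀ : EqSys), (∀ a ∈ l, a ∈ AS S) → (∀ K, F K ⊆ S) →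
      TreeOver B S (qTree F l K₀) := by
  intro l
  induction l with
  | nil => intro K₀ _ hF; exact hF K₀
  | cons a l ih =>
    intro K₀ hl hF
    refine ⟨hl a (by simp), fun v _ => ih _ (fun b hb => hl b (by simp [hb])) hF⟩

lemma path_qTree {B : Attr → Finset Val} {F : EqSys → DRS} :
    ∀ (l : List Attr) (K₀ K : EqSys) (Z : DRS),
      PathT B (qTree F l K₀) K Z →
      Z = F (K ∪ K₀) ∧ (∀ a ∈ l, ∃ v ∈ B a, (a, v) ∈ K) ∧ (∀ p ∈ K, p.1 ∈ l) := by
  intro l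
  induction l with
  | nil =>
    intro K₀ K Z hp
    cases hp with
    | leaf => simp
  | cons a l ih =>
    intro K₀ K Z hp
    cases hp with
    | node _ c v K' Z hv hp' =>
      obtain ⟨h1, h2, h3⟩ := ih _ K' Z hp'
      refine ⟨?_, ?_, ?_⟩
      · rw [h1]; congr 1
        ext q
        simp only [Finset.mem_union, Finset.mem_insert]
        tauto
      · intro b hb
        rcases List.mem_cons.mp hb with hb | hb
        · subst hb; exact ⟨v, hv, by simp⟩
        · obtain ⟨w, hw, hwK⟩ := h2 b hb
          exact ⟨w, hw, Finset.mem_insert_of_mem hwK⟩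
      · intro p hp
        rcases Finset.mem_insert.mp hp with h | h
        · simp [h]
        · exact List.mem_cons_of_mem _ (h3 p h)

lemma card_le_depth_of_path {B : Attr → Finset Val} :
    ∀ {Γ : DTree} {K : EqSys} {Z : DRS}, PathT B Γ K Z → K.card ≤ depthT B Γ := by
  intro Γ K Z hp
  induction hp with
  | leaf Z => simp [depthT]
  | node a c v K Z hv _ ih =>
    simp only [depthT]
    calc (insert (a, v) K).card ≤ K.card + 1 := Finset.card_insert_le _ _
    _ ≤ ((B a).sup fun w => depthT B (c w)) + 1 :=
        Nat.add_le_add_right (le_trans ih (Finset.le_sup (f := fun w => depthT B (c w)) hv)) 1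

lemma exists_path {B : Attr → Finset Val} {S : DRS} (v₀ : Attr → Val)
    (hv₀ : ∀ a ∈ AS S, v₀ a ∈ B a) :
    ∀ {Γ : DTree}, TreeOver B S Γ →
      ∃ K Z, PathT B Γ K Z ∧ Z ⊆ S ∧ ∀ p ∈ K, p.1 ∈ AS S ∧ p.2 = v₀ p.1 := by
  intro Γ
  induction Γ with
  | leaf Z => intro hT; exact ⟨∅, Z, PathT.leaf Z, hT, by simp⟩
  | node a c ih =>
    intro hT
    obtain ⟨haS, hc⟩ := hT
    obtain ⟨K, Z, hp, hZ, hK⟩ := ih (v₀ a) (hc _ (hv₀ a haS))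
    refine ⟨insert (a, v₀ a) K, Z, PathT.node a c (v₀ a) K Z (hv₀ a haS) hp, hZ, ?_⟩
    intro p hp'
    rcases Finset.mem_insert.mp hp' with h | h
    · subst h; exact ⟨haS, rfl⟩
    · exact hK p h

end Trees

section Upper

/-- The set over which `hSR` takes the infimum. -/
def setSR (S : DRS) : Set ℕ :=
  {m | ∃ Γ, TreeOver (Bo S) S Γ ∧ Solves (CondSR S) (Bo S) Γ ∧ depthT (Bo S) Γ = m}

lemma hSR_eq_sInf (S : DRS) : hSR S = sInf (setSR S) := rfl

/-- There is always a tree of depth `nS S` solving the SR problem: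
query all attributes. -/
lemma full_tree_works (S : DRS) :
    nS S ∈ setSR S := by
  classical
  refine ⟨qTree (fun K => S.filter fun r => Kr r ⊆ K) (AS S).toList ∅, ?_, ?_, ?_⟩
  · exact treeOver_qTree _ _ (fun a ha => (Finset.mem_toList).mp ha)
      (fun K => Finset.filter_subset _ _)
  · intro K Z hp _
    obtain ⟨hZ, h2, _⟩ := path_qTree _ _ _ _ hp
    rw [Finset.union_empty] at hZ
    constructor
    · intro r hr
      rw [hZ] at hr
      exact (Finset.mem_filter.mp hr).2
    · intro hZe r hr hcons
      have hrnot : ¬ Kr r ⊆ K := by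
        intro hsub
        have : r ∈ Z := by rw [hZ]; exact Finset.mem_filter.mpr ⟨hr, hsub⟩
        rw [hZe] at this; exact absurd this (Finset.notMem_empty r)
      obtain ⟨q, hq, hqK⟩ := Finset.not_subset.mp hrnot
      obtain ⟨p, hpr, hqp⟩ := mem_Kr_iff.mp hq
      have hpAS : p.1 ∈ AS S := mem_AS_iff.mpr ⟨r, hr, mem_Ar_iff.mpr ⟨p, hpr, rfl⟩⟩
      obtain ⟨v, _, hvK⟩ := h2 p.1 ((Finset.mem_toList).mpr hpAS)
      have : q.2 = v := hcons q (Finset.mem_union_left _ hq) (p.1, v)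
        (Finset.mem_union_right _ hvK) (by rw [hqp])
      apply hqK
      have hqv : q = (p.1, v) := by
        rw [hqp] at this ⊢; simp only at this; rw [this]
      rw [hqv]; exact hvK
  · rw [depth_qTree _ _ (fun a ha => Bo_nonempty_of_mem_AS ((Finset.mem_toList).mp ha))]
    exact Finset.length_toList _

lemma setSR_nonempty (S : DRS) : (setSR S).Nonempty := ⟨nS S, full_tree_works S⟩

lemma hSR_le_of_mem {S : DRS} {m : ℕ} (hm : m ∈ setSR S) : hSR S ≤ m :=
  Nat.sInf_le hm

lemma hSR_le_n (S : DRS) : hSR S ≤ nS S := hSR_le_of_mem (full_tree_works S)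

lemma le_hSR {S : DRS} {b : ℕ}
    (h : ∀ Γ, TreeOver (Bo S) S Γ → Solves (CondSR S) (Bo S) Γ → b ≤ depthT (Bo S) Γ) :
    b ≤ hSR S := by
  obtain ⟨Γ, h1, h2, h3⟩ := Nat.sInf_mem (setSR_nonempty S)
  rw [hSR_eq_sInf]
  rw [← h3] at *
  exact h Γ h1 h2

end Upper

section Upper2

/-- If every attribute has at most one value, querying the attributes of any single rule
solves SR. -/
lemma hSR_le_d_of_k1 {S : DRS} (hwf : WFS S) (hk : kS S = 1) : hSR S ≤ dS S := by
  classical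
  obtain ⟨⟨r, hr⟩, hWF⟩ := hwf
  have hrule : ruleLen r ≤ dS S := Finset.le_sup hr
  set l : List Attr := r.1.toList.map Prod.fst with hl
  have hlmem : ∀ a ∈ l, a ∈ AS S := by
    intro a ha
    obtain ⟨p, hp, hpa⟩ := List.mem_map.mp ha
    exact mem_AS_iff.mpr ⟨r, hr, mem_Ar_iff.mpr ⟨p, Finset.mem_toList.mp hp, hpa⟩⟩
  have hlen : l.length = ruleLen r := by
    rw [hl, List.length_map, Finset.length_toList]; rfl
  calc hSR S ≤ l.length := by
        apply hSR_le_of_mem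
        refine ⟨qTree (fun _ => {r}) l ∅, ?_, ?_, ?_⟩
        · exact treeOver_qTree _ _ hlmem (fun K => Finset.singleton_subset_iff.mpr hr)
        · intro K Z hp _
          obtain ⟨hZ, h2, _⟩ := path_qTree _ _ _ _ hp
          constructor
          · intro r' hr'
            rw [hZ, Finset.mem_singleton] at hr'
            subst hr'
            intro q hq
            obtain ⟨p, hpr, hqp⟩ := mem_Kr_iff.mp hq
            have hpl : p.1 ∈ l :=
              List.mem_map.mpr ⟨p, Finset.mem_toList.mpr hpr, rfl⟩
            obtain ⟨v, hvB, hvK⟩ := h2 p.1 hpl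
            obtain ⟨u, hu, hvu⟩ := mem_Bo_iff.mp hvB
            have hp2 : p.2 ∈ VS S p.1 := mem_VS_of hr hpr
            have hcard : (VS S p.1).card ≤ 1 := by
              rw [← hk]
              exact Finset.le_sup (f := fun a => (VS S a).card) (hlmem p.1 hpl)
            have : u = p.2 :=
              Finset.card_le_one.mp hcard u hu p.2 hp2
            rw [hqp, ← this, ← hvu]
            exact hvK
          · intro hZe
            rw [hZ] at hZe
            exact absurd hZe (by simp)
        · exact depth_qTree _ _ (fun a ha => Bo_nonempty_of_mem_AS (hlmem a ha))
    _ ≤ dS S := by rw [hlen]; exact hrule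

/-- If all rules have length at most 1 and there is at least one attribute,
one query solves SR. -/
lemma hSR_le_one_of_d1 {S : DRS} (hwf : WFS S) (hd : dS S = 1) (hn : 0 < nS S) :
    hSR S ≤ 1 := by
  classical
  have hAS : (AS S).Nonempty := Finset.card_pos.mp hn
  obtain ⟨a, ha⟩ := hAS
  apply hSR_le_of_mem
  refine ⟨qTree (fun K => S.filter fun r => Kr r ⊆ K) [a] ∅, ?_, ?_, ?_⟩
  · exact treeOver_qTree _ _ (by simpa using ha) (fun K => Finset.filter_subset _ _)
  · intro K Z hp _
    obtain ⟨hZ, h2, _⟩ := path_qTree _ _ _ _ hp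
    rw [Finset.union_empty] at hZ
    constructor
    · intro r' hr'
      rw [hZ] at hr'
      exact (Finset.mem_filter.mp hr').2
    · intro hZe
      exfalso
      obtain ⟨v, hvB, hvK⟩ := h2 a (by simp)
      obtain ⟨u, hu, hvu⟩ := mem_Bo_iff.mp hvB
      obtain ⟨r, hrS, hur⟩ := exists_rule_of_mem_VS hu
      have hrlen : r.1.card ≤ 1 := by
        have h1 : ruleLen r ≤ dS S := Finset.le_sup hrS
        rw [hd] at h1; exact h1
      have hr1 : r.1 = {(a, u)} :=
        Finset.eq_singleton_iff_unique_mem.mpr ⟨hur, fun q hq => by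
          have := Finset.card_le_one.mp hrlen q hq (a, u) hur
          exact this⟩
      have hKr : Kr r ⊆ K := by
        intro q hq
        obtain ⟨p, hpr, hqp⟩ := mem_Kr_iff.mp hq
        rw [hr1, Finset.mem_singleton] at hpr
        rw [hqp, hpr, ← hvu]
        exact hvK
      have : r ∈ Z := by rw [hZ]; exact Finset.mem_filter.mpr ⟨hrS, hKr⟩
      rw [hZe] at this
      exact absurd this (Finset.notMem_empty r)
  · rw [depth_qTree [a] ∅ (by
      intro b hb
      simp only [List.mem_singleton] at hb
      subst hb
      exact Bo_nonempty_of_mem_AS ha)]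
    rfl

end Upper2

section Helpers

lemma consistent_Kr {r : Rule} (h : WFRule r) : Consistent (Kr r) := by
  intro p hp q hq hfst
  obtain ⟨p', hp', hpe⟩ := mem_Kr_iff.mp hp
  obtain ⟨q', hq', hqe⟩ := mem_Kr_iff.mp hq
  rw [hpe, hqe] at hfst ⊢
  simp only at hfst ⊢
  rw [h p' hp' q' hq' hfst]

lemma dS_const {S : DRS} {d : ℕ} (h : S.Nonempty) (hc : ∀ r ∈ S, ruleLen r = d) :
    dS S = d := by
  rw [dS, Finset.sup_congr rfl hc, Finset.sup_const h]

lemma SRred_of_const_card {S : DRS} {c : ℕ} (hc : ∀ r ∈ S, r.1.card = c) : SRred S := by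
  intro r hr ⟨r', hr', hss⟩
  have := Finset.card_lt_card hss
  rw [hc r hr, hc r' hr'] at this
  exact lt_irrefl _ this

lemma kS_eq {S : DRS} {k : ℕ} (hub : ∀ a ∈ AS S, (VS S a).card ≤ k)
    {a₀ : Attr} (ha₀ : a₀ ∈ AS S) (hval : (VS S a₀).card = k) : kS S = k := by
  apply le_antisymm
  · exact Finset.sup_le hub
  · rw [← hval]; exact Finset.le_sup (f := fun a => (VS S a).card) ha₀

lemma one_le_hSR {S : DRS} (hwf : WFS S) (hne : ∀ r ∈ S, r.1 ≠ ∅) : 1 ≤ hSR S := by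
  apply le_hSR
  intro Γ hT hS
  cases Γ with
  | node a c => simp [depthT]
  | leaf Z =>
    exfalso
    have hpath : PathT (Bo S) (.leaf Z) ∅ Z := PathT.leaf Z
    have hcons : Consistent (∅ : EqSys) := by intro p hp; simp at hp
    obtain ⟨h1, h2⟩ := hS ∅ Z hpath hcons
    by_cases hZ : Z = ∅
    · obtain ⟨r, hr⟩ := hwf.1
      apply h2 hZ r hr
      have : Kr r ∪ ∅ = Kr r := Finset.union_empty _
      rw [this]
      exact consistent_Kr (hwf.2 r hr)
    · obtain ⟨r, hr⟩ := Finset.nonempty_iff_ne_empty.mpr hZ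
      have hsub : Kr r ⊆ ∅ := h1 r hr
      have : Kr r = ∅ := Finset.subset_empty.mp hsub
      have hre : r.1 = ∅ := by
        rw [Kr, Finset.image_eq_empty] at this
        exact this
      exact hne r (hT hr) hre

end Helpers

section Witness1

/-- Witness system for `d = 1`. -/
def S1 (n k : ℕ) : DRS :=
  ((Finset.range n).image fun i => (({(i, 0)} : Finset (Attr × ℕ)), 0)) ∪
  ((Finset.range k).image fun j => (({(0, j)} : Finset (Attr × ℕ)), 0))

lemma mem_S1 {n k : ℕ} {r : Rule} : r ∈ S1 n k ↔
    (∃ i < n, r = ({(i, 0)}, 0)) ∨ (∃ j < k, r = ({(0, j)}, 0)) := by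
  simp [S1, eq_comm]

lemma S1_card_one {n k : ℕ} : ∀ r ∈ S1 n k, r.1.card = 1 := by
  intro r hr
  rcases mem_S1.mp hr with ⟨i, _, h⟩ | ⟨j, _, h⟩ <;> subst h <;> simp

lemma WFS_S1 {n k : ℕ} (hn : 0 < n) : WFS (S1 n k) := by
  constructor
  · exact ⟨({(0, 0)}, 0), mem_S1.mpr (Or.inl ⟨0, hn, rfl⟩)⟩
  · intro r hr
    rcases mem_S1.mp hr with ⟨i, _, h⟩ | ⟨j, _, h⟩ <;> subst h <;>
      intro p hp q hq _ <;> simp_all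

lemma AS_S1 {n k : ℕ} (hn : 0 < n) : AS (S1 n k) = Finset.range n := by
  ext a
  simp only [AS, Finset.mem_biUnion, Finset.mem_range]
  constructor
  · rintro ⟨r, hr, har⟩
    rcases mem_S1.mp hr with ⟨i, hi, h⟩ | ⟨j, hj, h⟩ <;> subst h <;>
      simp [Ar] at har <;> subst har <;> omega
  · intro ha
    exact ⟨({(a, 0)}, 0), mem_S1.mpr (Or.inl ⟨a, ha, rfl⟩), by simp [Ar]⟩

lemma nS_S1 {n k : ℕ} (hn : 0 < n) : nS (S1 n k) = n := by
  rw [nS, AS_S1 hn, Finset.card_range]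

lemma dS_S1 {n k : ℕ} (hn : 0 < n) : dS (S1 n k) = 1 :=
  dS_const (WFS_S1 hn).1 S1_card_one

lemma VS_S1 {n k : ℕ} {a : Attr} {u : ℕ} :
    u ∈ VS (S1 n k) a ↔ (a < n ∧ u = 0) ∨ (a = 0 ∧ u < k) := by
  constructor
  · intro hu
    obtain ⟨r, hr, hau⟩ := exists_rule_of_mem_VS hu
    rcases mem_S1.mp hr with ⟨i, hi, h⟩ | ⟨j, hj, h⟩ <;> subst h <;> simp at hau
    · exact Or.inl ⟨hau.1 ▸ hi, hau.2⟩
    · exact Or.inr ⟨hau.1, by omega⟩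
  · rintro (⟨ha, hu⟩ | ⟨ha, hu⟩)
    · exact mem_VS_of (mem_S1.mpr (Or.inl ⟨a, ha, rfl⟩)) (by rw [hu]; simp)
    · exact mem_VS_of (mem_S1.mpr (Or.inr ⟨u, hu, rfl⟩)) (by rw [ha]; simp)

lemma kS_S1 {n k : ℕ} (hn : 0 < n) (hk : 0 < k) : kS (S1 n k) = k := by
  apply kS_eq (a₀ := 0)
  · intro a ha
    rw [AS_S1 hn, Finset.mem_range] at ha
    by_cases h0 : a = 0
    · subst h0
      have : VS (S1 n k) 0 ⊆ Finset.range k := by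
        intro u hu
        rcases VS_S1.mp hu with ⟨_, hu0⟩ | ⟨_, huk⟩ <;> simp <;> omega
      calc (VS (S1 n k) 0).card ≤ (Finset.range k).card := Finset.card_le_card this
        _ = k := Finset.card_range k
    · have : VS (S1 n k) a ⊆ {0} := by
        intro u hu
        rcases VS_S1.mp hu with ⟨_, hu0⟩ | ⟨ha0, _⟩
        · simp [hu0]
        · exact absurd ha0 h0
      calc (VS (S1 n k) a).card ≤ ({0} : Finset ℕ).card := Finset.card_le_card this
        _ = 1 := rfl
        _ ≤ k := hk
  · rw [AS_S1 hn]; simpa using hn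
  · have : VS (S1 n k) 0 = Finset.range k := by
      ext u
      rw [VS_S1, Finset.mem_range]
      constructor
      · rintro (⟨_, h⟩ | ⟨_, h⟩)
        · rw [h]; exact hk
        · exact h
      · intro h; exact Or.inr ⟨rfl, h⟩
    rw [this, Finset.card_range]

lemma SRred_S1 {n k : ℕ} : SRred (S1 n k) := SRred_of_const_card S1_card_one

lemma hSR_S1 {n k : ℕ} (hn : 0 < n) (hk : 0 < k) : hSR (S1 n k) = 1 := by
  apply le_antisymm
  · exact hSR_le_one_of_d1 (WFS_S1 hn) (dS_S1 hn) (by rw [nS_S1 hn]; exact hn)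
  · apply one_le_hSR (WFS_S1 hn)
    intro r hr
    rcases mem_S1.mp hr with ⟨i, _, h⟩ | ⟨j, _, h⟩ <;> subst h <;> simp

end Witness1

section Witness2

/-- Witness system for `k = 1`: sliding windows of `d` consecutive attributes. -/
def S2 (n d : ℕ) : DRS :=
  (Finset.range (n - d + 1)).image fun j =>
    (((Finset.Ico j (j + d)).image fun i => ((i, 0) : Attr × ℕ)), 0)

lemma mem_S2 {n d : ℕ} {r : Rule} : r ∈ S2 n d ↔
    ∃ j ≤ n - d, r = (((Finset.Ico j (j + d)).image fun i => ((i, 0) : Attr × ℕ)), 0) := by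
  simp [S2, eq_comm, Nat.lt_succ_iff]

lemma S2_card {n d : ℕ} : ∀ r ∈ S2 n d, r.1.card = d := by
  intro r hr
  obtain ⟨j, _, h⟩ := mem_S2.mp hr
  subst h
  simp only
  rw [Finset.card_image_of_injective _ (fun x y h => by simpa using h)]
  simp

lemma S2_nonempty {n d : ℕ} : (S2 n d).Nonempty :=
  ⟨_, mem_S2.mpr ⟨0, Nat.zero_le _, rfl⟩⟩

lemma S2_snd_zero {n d : ℕ} {r : Rule} (hr : r ∈ S2 n d) : ∀ p ∈ r.1, p.2 = 0 := by
  obtain ⟨j, _, h⟩ := mem_S2.mp hr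
  subst h
  intro p hp
  simp only [Finset.mem_image] at hp
  obtain ⟨i, _, hi⟩ := hp
  rw [← hi]

lemma WFS_S2 {n d : ℕ} : WFS (S2 n d) := by
  refine ⟨S2_nonempty, fun r hr p hp q hq _ => ?_⟩
  rw [S2_snd_zero hr p hp, S2_snd_zero hr q hq]

lemma Ar_S2 {j d : ℕ} :
    Ar (((Finset.Ico j (j + d)).image fun i => ((i, 0) : Attr × ℕ)), 0) =
      Finset.Ico j (j + d) := by
  rw [Ar]
  simp only
  rw [Finset.image_image]
  exact Finset.image_id

lemma AS_S2 {n d : ℕ} (hd : 0 < d) (hdn : d ≤ n) : AS (S2 n d) = Finset.range n := by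
  ext a
  simp only [AS, Finset.mem_biUnion, Finset.mem_range]
  constructor
  · rintro ⟨r, hr, har⟩
    obtain ⟨j, hj, h⟩ := mem_S2.mp hr
    subst h
    rw [Ar_S2, Finset.mem_Ico] at har
    calc a < j + d := har.2
      _ ≤ (n - d) + d := Nat.add_le_add_right hj d
      _ = n := Nat.sub_add_cancel hdn
  · intro ha
    refine ⟨_, mem_S2.mpr ⟨min a (n - d), min_le_right _ _, rfl⟩, ?_⟩
    rw [Ar_S2, Finset.mem_Ico]
    refine ⟨min_le_left _ _, ?_⟩
    rcases le_total a (n - d) with h | h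
    · rw [min_eq_left h]
      exact Nat.lt_add_of_pos_right hd
    · rw [min_eq_right h]
      calc a < n := ha
        _ = (n - d) + d := (Nat.sub_add_cancel hdn).symm

lemma nS_S2 {n d : ℕ} (hd : 0 < d) (hdn : d ≤ n) : nS (S2 n d) = n := by
  rw [nS, AS_S2 hd hdn, Finset.card_range]

lemma dS_S2 {n d : ℕ} : dS (S2 n d) = d := dS_const S2_nonempty S2_card

lemma VS_S2_subset {n d : ℕ} (a : Attr) : VS (S2 n d) a ⊆ {0} := by
  intro u hu
  obtain ⟨r, hr, hau⟩ := exists_rule_of_mem_VS hu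
  have := S2_snd_zero hr (a, u) hau
  simp_all

lemma VS_S2_zero_mem {n d : ℕ} {a : Attr} (ha : a ∈ AS (S2 n d)) : 0 ∈ VS (S2 n d) a := by
  obtain ⟨u, hu⟩ := VS_nonempty_of_mem_AS ha
  have := VS_S2_subset a hu
  simp only [Finset.mem_singleton] at this
  rwa [this] at hu

lemma kS_S2 {n d : ℕ} (hd : 0 < d) (hdn : d ≤ n) (hn : 0 < n) : kS (S2 n d) = 1 := by
  have h0 : (0 : Attr) ∈ AS (S2 n d) := by
    rw [AS_S2 hd hdn]; simpa using hn
  apply kS_eq (a₀ := 0)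
  · intro a ha
    calc (VS (S2 n d) a).card ≤ ({0} : Finset ℕ).card :=
        Finset.card_le_card (VS_S2_subset a)
      _ = 1 := rfl
  · exact h0
  · have : VS (S2 n d) 0 = {0} :=
      le_antisymm (VS_S2_subset 0) (Finset.singleton_subset_iff.mpr (VS_S2_zero_mem h0))
    rw [this]; rfl

lemma SRred_S2 {n d : ℕ} : SRred (S2 n d) := SRred_of_const_card S2_card

lemma hSR_S2 {n d : ℕ} (hd : 0 < d) (hdn : d ≤ n) (hn : 0 < n) : hSR (S2 n d) = d := by
  apply le_antisymm
  · have := hSR_le_d_of_k1 WFS_S2 (kS_S2 hd hdn hn)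
    rwa [dS_S2] at this
  · apply le_hSR
    intro Γ hT hS
    obtain ⟨K, Z, hpath, hZS, hK⟩ := exists_path (fun _ => some 0)
      (fun a ha => mem_Bo_iff.mpr ⟨0, VS_S2_zero_mem ha, rfl⟩) hT
    have hcons : Consistent K := by
      intro p hp q hq _
      rw [(hK p hp).2, (hK q hq).2]
    obtain ⟨h1, h2⟩ := hS K Z hpath hcons
    by_cases hZ : Z = ∅
    · exfalso
      obtain ⟨r, hr⟩ := S2_nonempty (n := n) (d := d)
      apply h2 hZ r hr
      intro p hp q hq _
      rcases Finset.mem_union.mp hp with h | h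
      · obtain ⟨p', hp', hpe⟩ := mem_Kr_iff.mp h
        rcases Finset.mem_union.mp hq with h' | h'
        · obtain ⟨q', hq', hqe⟩ := mem_Kr_iff.mp h'
          rw [hpe, hqe]
          simp only
          rw [S2_snd_zero hr p' hp', S2_snd_zero hr q' hq']
        · rw [hpe, (hK q h').2]
          simp only
          rw [S2_snd_zero hr p' hp']
      · rcases Finset.mem_union.mp hq with h' | h'
        · obtain ⟨q', hq', hqe⟩ := mem_Kr_iff.mp h'
          rw [(hK p h).2, hqe]
          simp only
          rw [S2_snd_zero hr q' hq']
        · rw [(hK p h).2, (hK q h').2]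
    · obtain ⟨r, hr⟩ := Finset.nonempty_iff_ne_empty.mpr hZ
      have hsub : Kr r ⊆ K := h1 r hr
      have hrS : r ∈ S2 n d := hZS hr
      calc d = r.1.card := (S2_card r hrS).symm
        _ = (Kr r).card := (card_Kr r).symm
        _ ≤ K.card := Finset.card_le_card hsub
        _ ≤ depthT (Bo (S2 n d)) Γ := card_le_depth_of_path hpath

end Witness2

section Witness3

lemma modinj {n i t t' : ℕ} (ht : t < n) (ht' : t' < n)
    (h : (i + t) % n = (i + t') % n) : t = t' := by
  have h2 : t % n = t' % n := Nat.ModEq.add_left_cancel' i h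
  rwa [Nat.mod_eq_of_lt ht, Nat.mod_eq_of_lt ht'] at h2

/-- The `d-1` "zero" equations of the `i`-th rule. -/
def zeros3 (n d i : ℕ) : Finset (Attr × ℕ) :=
  (Finset.Ico 1 d).image fun t => (((i + t) % n, 0) : Attr × ℕ)

lemma mem_zeros3 {n d i : ℕ} {p : Attr × ℕ} :
    p ∈ zeros3 n d i ↔ ∃ t, 1 ≤ t ∧ t < d ∧ p = ((i + t) % n, 0) := by
  simp [zeros3, eq_comm, and_assoc]

lemma zeros3_snd {n d i : ℕ} {p : Attr × ℕ} (hp : p ∈ zeros3 n d i) : p.2 = 0 := by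
  obtain ⟨t, _, _, h⟩ := mem_zeros3.mp hp
  rw [h]

lemma zeros3_fst_lt {n d i : ℕ} (hn : 0 < n) {p : Attr × ℕ} (hp : p ∈ zeros3 n d i) :
    p.1 < n := by
  obtain ⟨t, _, _, h⟩ := mem_zeros3.mp hp
  rw [h]
  exact Nat.mod_lt _ hn

lemma zeros3_fst_ne {n d i : ℕ} (hi : i < n) (hdn : d ≤ n) {p : Attr × ℕ}
    (hp : p ∈ zeros3 n d i) : p.1 ≠ i := by
  obtain ⟨t, ht1, htd, h⟩ := mem_zeros3.mp hp
  rw [h]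
  intro he
  simp only at he
  have h0 : (i + t) % n = (i + 0) % n := by
    rw [Nat.add_zero, Nat.mod_eq_of_lt hi]; exact he
  have := modinj (lt_of_lt_of_le htd hdn) (lt_of_lt_of_le (Nat.lt_of_lt_of_le ht1 htd.le) hdn) h0
  omega

lemma card_zeros3 {n d i : ℕ} (hdn : d ≤ n) : (zeros3 n d i).card = d - 1 := by
  rw [zeros3, Finset.card_image_of_injOn, Nat.card_Ico]
  intro t ht t' ht' h
  simp only [Finset.coe_Ico, Set.mem_Ico] at ht ht'
  simp only [Prod.mk.injEq] at h
  exact modinj (lt_of_lt_of_le ht.2 hdn) (lt_of_lt_of_le ht'.2 hdn) h.1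

/-- The `i`-th main rule. -/
def R3 (n d i : ℕ) : Rule := (insert ((i, 1) : Attr × ℕ) (zeros3 n d i), 0)
/-- The extra rules providing additional values of attribute `0`. -/
def R3' (n d t : ℕ) : Rule := (insert ((0, t) : Attr × ℕ) (zeros3 n d 0), 0)

/-- Witness system for `k ≥ 2`, `d ≥ 2`. -/
def S3 (n d k : ℕ) : DRS :=
  ((Finset.range n).image (R3 n d)) ∪ ((Finset.Ico 2 k).image (R3' n d))

lemma mem_S3 {n d k : ℕ} {r : Rule} : r ∈ S3 n d k ↔
    (∃ i < n, r = R3 n d i) ∨ (∃ t, 2 ≤ t ∧ t < k ∧ r = R3' n d t) := by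
  simp [S3, eq_comm, and_assoc]

lemma R3_one_notMem {n d i : ℕ} : ((i, 1) : Attr × ℕ) ∉ zeros3 n d i := fun h => by
  have := zeros3_snd h; simp at this

lemma R3'_notMem {n d t : ℕ} (ht : 2 ≤ t) : ((0, t) : Attr × ℕ) ∉ zeros3 n d 0 := fun h => by
  have := zeros3_snd h; simp only at this; omega

lemma S3_card {n d k : ℕ} (hd : 1 ≤ d) (hdn : d ≤ n) : ∀ r ∈ S3 n d k, r.1.card = d := by
  intro r hr
  rcases mem_S3.mp hr with ⟨i, hi, h⟩ | ⟨t, ht, _, h⟩ <;> subst h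
  · show (insert ((i, 1) : Attr × ℕ) (zeros3 n d i)).card = d
    rw [Finset.card_insert_of_notMem R3_one_notMem, card_zeros3 hdn]
    omega
  · show (insert ((0, t) : Attr × ℕ) (zeros3 n d 0)).card = d
    rw [Finset.card_insert_of_notMem (R3'_notMem ht), card_zeros3 hdn]
    omega

lemma S3_nonempty {n d k : ℕ} (hn : 0 < n) : (S3 n d k).Nonempty :=
  ⟨R3 n d 0, mem_S3.mpr (Or.inl ⟨0, hn, rfl⟩)⟩

lemma WFS_S3 {n d k : ℕ} (hn : 0 < n) (hdn : d ≤ n) : WFS (S3 n d k) := by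
  refine ⟨S3_nonempty hn, fun r hr => ?_⟩
  rcases mem_S3.mp hr with ⟨i, hi, h⟩ | ⟨t, ht, _, h⟩ <;> subst h <;>
      intro p hp q hq hfst
  · rcases Finset.mem_insert.mp hp with hp | hp <;>
      rcases Finset.mem_insert.mp hq with hq | hq
    · rw [hp, hq]
    · exfalso
      apply zeros3_fst_ne hi hdn hq
      rw [← hfst, hp]
    · exfalso
      apply zeros3_fst_ne hi hdn hp
      rw [hfst, hq]
    · rw [zeros3_snd hp, zeros3_snd hq]
  · rcases Finset.mem_insert.mp hp with hp | hp <;>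
      rcases Finset.mem_insert.mp hq with hq | hq
    · rw [hp, hq]
    · exfalso
      apply zeros3_fst_ne hn hdn hq
      rw [← hfst, hp]
    · exfalso
      apply zeros3_fst_ne hn hdn hp
      rw [hfst, hq]
    · rw [zeros3_snd hp, zeros3_snd hq]

lemma AS_S3 {n d k : ℕ} (hn : 0 < n) : AS (S3 n d k) = Finset.range n := by
  ext a
  simp only [Finset.mem_range]
  constructor
  · intro ha
    obtain ⟨r, hr, har⟩ := mem_AS_iff.mp ha
    obtain ⟨p, hp, hpa⟩ := mem_Ar_iff.mp har
    subst hpa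
    rcases mem_S3.mp hr with ⟨i, hi, h⟩ | ⟨t, _, _, h⟩ <;> subst h
    · rcases Finset.mem_insert.mp hp with hp | hp
      · rw [hp]; exact hi
      · exact zeros3_fst_lt hn hp
    · rcases Finset.mem_insert.mp hp with hp | hp
      · rw [hp]; exact hn
      · exact zeros3_fst_lt hn hp
  · intro ha
    refine mem_AS_iff.mpr ⟨R3 n d a, mem_S3.mpr (Or.inl ⟨a, ha, rfl⟩),
      mem_Ar_iff.mpr ⟨(a, 1), Finset.mem_insert_self _ _, rfl⟩⟩

lemma nS_S3 {n d k : ℕ} (hn : 0 < n) : nS (S3 n d k) = n := by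
  rw [nS, AS_S3 hn, Finset.card_range]

lemma dS_S3 {n d k : ℕ} (hn : 0 < n) (hd : 1 ≤ d) (hdn : d ≤ n) : dS (S3 n d k) = d :=
  dS_const (S3_nonempty hn) (S3_card hd hdn)

lemma SRred_S3 {n d k : ℕ} (hd : 1 ≤ d) (hdn : d ≤ n) : SRred (S3 n d k) :=
  SRred_of_const_card (S3_card hd hdn)

lemma one_mem_VS_S3 {n d k : ℕ} {a : Attr} (ha : a < n) : 1 ∈ VS (S3 n d k) a :=
  mem_VS_of (mem_S3.mpr (Or.inl ⟨a, ha, rfl⟩)) (Finset.mem_insert_self _ _)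

lemma zero_mem_VS_S3 {n d k : ℕ} (hn : 0 < n) (hd : 2 ≤ d) {a : Attr} (ha : a < n) :
    0 ∈ VS (S3 n d k) a := by
  set j := (a + n - 1) % n with hj
  have hjn : j < n := Nat.mod_lt _ hn
  apply mem_VS_of (mem_S3.mpr (Or.inl ⟨j, hjn, rfl⟩))
  apply Finset.mem_insert_of_mem
  have h1d : 1 < d := lt_of_lt_of_le one_lt_two hd
  apply mem_zeros3.mpr ⟨1, le_refl 1, h1d, ?_⟩
  have : (j + 1) % n = a := by
    rw [hj, Nat.mod_add_mod]
    have : a + n - 1 + 1 = a + n := Nat.succ_pred_eq_of_pos (Nat.add_pos_right a hn)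
    rw [this, Nat.add_mod_right, Nat.mod_eq_of_lt ha]
  rw [Prod.mk.injEq]
  constructor
  · exact this.symm
  · rfl

lemma Ico_mem_VS_S3 {n d k t : ℕ} (ht : 2 ≤ t) (htk : t < k) : t ∈ VS (S3 n d k) 0 :=
  mem_VS_of (mem_S3.mpr (Or.inr ⟨t, ht, htk, rfl⟩)) (Finset.mem_insert_self _ _)

lemma VS_S3_subset {n d k : ℕ} (hk : 2 ≤ k) (a : Attr) :
    VS (S3 n d k) a ⊆ Finset.range k := by
  intro u hu
  obtain ⟨r, hr, hau⟩ := exists_rule_of_mem_VS hu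
  rw [Finset.mem_range]
  rcases mem_S3.mp hr with ⟨i, hi, h⟩ | ⟨t, ht, htk, h⟩ <;> subst h <;>
    rcases Finset.mem_insert.mp hau with h | h
  · have : u = 1 := congrArg Prod.snd h
    omega
  · have : u = 0 := zeros3_snd h
    omega
  · have : u = t := congrArg Prod.snd h
    omega
  · have : u = 0 := zeros3_snd h
    omega

lemma VS_S3_subset' {n d k : ℕ} {a : Attr} (ha : a ≠ 0) :
    VS (S3 n d k) a ⊆ {0, 1} := by
  intro u hu
  obtain ⟨r, hr, hau⟩ := exists_rule_of_mem_VS hu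
  simp only [Finset.mem_insert, Finset.mem_singleton]
  rcases mem_S3.mp hr with ⟨i, hi, h⟩ | ⟨t, ht, htk, h⟩ <;> subst h <;>
    rcases Finset.mem_insert.mp hau with h | h
  · exact Or.inr (congrArg Prod.snd h)
  · exact Or.inl (zeros3_snd h)
  · exact absurd (congrArg Prod.fst h) ha
  · exact Or.inl (zeros3_snd h)

lemma VS_S3_zero {n d k : ℕ} (hn : 0 < n) (hd : 2 ≤ d) (hk : 2 ≤ k) :
    VS (S3 n d k) 0 = Finset.range k := by
  apply le_antisymm (VS_S3_subset hk 0)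
  intro u hu
  rw [Finset.mem_range] at hu
  match u, hu with
  | 0, _ => exact zero_mem_VS_S3 hn hd hn
  | 1, _ => exact one_mem_VS_S3 hn
  | (t+2), h => exact Ico_mem_VS_S3 (by omega) h

lemma kS_S3 {n d k : ℕ} (hn : 0 < n) (hd : 2 ≤ d) (hk : 2 ≤ k) : kS (S3 n d k) = k := by
  apply kS_eq (a₀ := 0)
  · intro a _
    calc (VS (S3 n d k) a).card ≤ (Finset.range k).card :=
        Finset.card_le_card (VS_S3_subset hk a)
      _ = k := Finset.card_range k
  · rw [AS_S3 hn]; simpa using hn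
  · rw [VS_S3_zero hn hd hk, Finset.card_range]

end Witness3

section Witness3b

lemma hSR_S3 {n d k : ℕ} (hn : 0 < n) (hd : 2 ≤ d) (hk : 2 ≤ k) (hdn : d ≤ n) :
    hSR (S3 n d k) = n := by
  apply le_antisymm
  · have := hSR_le_n (S3 n d k)
    rwa [nS_S3 hn] at this
  · apply le_hSR
    intro Γ hT hS
    have hv₀ : ∀ a ∈ AS (S3 n d k), (some 0 : Val) ∈ Bo (S3 n d k) a := by
      intro a ha
      rw [AS_S3 hn, Finset.mem_range] at ha
      exact mem_Bo_iff.mpr ⟨0, zero_mem_VS_S3 hn hd ha, rfl⟩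
    obtain ⟨K, Z, hpath, hZS, hK⟩ := exists_path (fun _ => some 0) hv₀ hT
    have hcons : Consistent K := by
      intro p hp q hq _
      rw [(hK p hp).2, (hK q hq).2]
    obtain ⟨h1, h2⟩ := hS K Z hpath hcons
    have hZ : Z = ∅ := by
      rw [Finset.eq_empty_iff_forall_notMem]
      intro r hrZ
      have hsub : Kr r ⊆ K := h1 r hrZ
      rcases mem_S3.mp (hZS hrZ) with ⟨i, hi, h⟩ | ⟨t, ht, htk, h⟩ <;> subst h
      · have hmem : ((i, some 1) : Attr × Val) ∈ Kr (R3 n d i) :=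
          mem_Kr_iff.mpr ⟨(i, 1), Finset.mem_insert_self _ _, rfl⟩
        have := (hK _ (hsub hmem)).2
        simp at this
      · have hmem : ((0, some t) : Attr × Val) ∈ Kr (R3' n d t) :=
          mem_Kr_iff.mpr ⟨(0, t), Finset.mem_insert_self _ _, rfl⟩
        have := (hK _ (hsub hmem)).2
        simp only [Option.some.injEq] at this
        omega
    have hkey : ∀ i < n, ((i, some 0) : Attr × Val) ∈ K := by
      intro i hi
      have hnc := h2 hZ (R3 n d i) (mem_S3.mpr (Or.inl ⟨i, hi, rfl⟩))
      rw [Consistent] at hnc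
      push_neg at hnc
      obtain ⟨p, hp, q, hq, hfst, hsnd⟩ := hnc
      have hmemK : ∀ x ∈ Kr (R3 n d i) ∪ K, x = ((i, some 0) : Attr × Val) → x ∈ K := by
        intro x hx hxe
        rcases Finset.mem_union.mp hx with hKr | hKm
        · exfalso
          obtain ⟨p', hp', hpe⟩ := mem_Kr_iff.mp hKr
          rw [hxe] at hpe
          have hfst' : p'.1 = i := (congrArg Prod.fst hpe).symm
          have hsnd' : p'.2 = 0 := by
            have := congrArg Prod.snd hpe
            simpa using this.symm
          rcases Finset.mem_insert.mp hp' with h | h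
          · rw [h] at hsnd'; simp at hsnd'
          · exact zeros3_fst_ne hi hdn h hfst'
        · exact hKm
      have hx : ∀ x ∈ Kr (R3 n d i) ∪ K,
          x.2 = some 0 ∨ x = ((i, some 1) : Attr × Val) := by
        intro x hx
        rcases Finset.mem_union.mp hx with hKr | hKm
        · obtain ⟨p', hp', hpe⟩ := mem_Kr_iff.mp hKr
          rcases Finset.mem_insert.mp hp' with h | h
          · right; rw [hpe, h]
          · left; rw [hpe]; simp only
            rw [zeros3_snd h]
        · exact Or.inl (hK x hKm).2
      rcases hx p hp with hp0 | hp1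
      · rcases hx q hq with hq0 | hq1
        · exact absurd (hp0.trans hq0.symm) hsnd
        · have hpi : p = ((i, some 0) : Attr × Val) := by
            have : p.1 = i := by rw [hfst, hq1]
            rw [← this, ← hp0]
          exact hpi ▸ hmemK p hp hpi
      · rcases hx q hq with hq0 | hq1
        · have hqi : q = ((i, some 0) : Attr × Val) := by
            have : q.1 = i := by rw [← hfst, hp1]
            rw [← this, ← hq0]
          exact hqi ▸ hmemK q hq hqi
        · exact absurd (by rw [hp1, hq1]) hsnd
    have hsub : (Finset.range n).image (fun i => ((i, some 0) : Attr × Val)) ⊆ K := by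
      intro x hx
      obtain ⟨i, hi, hxe⟩ := Finset.mem_image.mp hx
      rw [← hxe]
      exact hkey i (Finset.mem_range.mp hi)
    calc n = ((Finset.range n).image fun i => ((i, some 0) : Attr × Val)).card := by
          rw [Finset.card_image_of_injective _ (fun x y h => by simpa using h),
            Finset.card_range]
      _ ≤ K.card := Finset.card_le_card hsub
      _ ≤ depthT (Bo (S3 n d k)) Γ := card_le_depth_of_path hpath

end Witness3b

/-- the value of `H_SR^R(n,d,k) = H_SR(n,d,k)`. -/
theorem stmt9 (n d k : ℕ) (hn : 0 < n) (hd : 0 < d) (hk : 0 < k) (hdn : d ≤ n) :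
    HmaxR hSR SRred n d k = Hmax hSR n d k ∧
    Hmax hSR n d k = (if d = 1 then 1 else if k = 1 then d else n) := by
  classical
  set b : ℕ := if d = 1 then 1 else if k = 1 then d else n with hb
  -- upper bound for all systems with the given parameters
  have hUB : ∀ m ∈ {m | ∃ S, WFS S ∧ nS S = n ∧ dS S = d ∧ kS S = k ∧ hSR S = m},
      m ≤ b := by
    rintro m ⟨S, hwf, hnS, hdS, hkS, hm⟩
    rw [hb, ← hm]
    by_cases hd1 : d = 1
    · rw [if_pos hd1]
      exact hSR_le_one_of_d1 hwf (by rw [hdS, hd1]) (by rw [hnS]; exact hn)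
    · rw [if_neg hd1]
      by_cases hk1 : k = 1
      · rw [if_pos hk1]
        have := hSR_le_d_of_k1 hwf (by rw [hkS, hk1])
        rwa [hdS] at this
      · rw [if_neg hk1]
        have := hSR_le_n S
        rwa [hnS] at this
  -- a reduced witness system attaining the bound
  have hWit : b ∈ {m | ∃ S, WFS S ∧ SRred S ∧ nS S = n ∧ dS S = d ∧ kS S = k ∧
      hSR S = m} := by
    by_cases hd1 : d = 1
    · refine ⟨S1 n k, WFS_S1 hn, SRred_S1, nS_S1 hn, ?_, kS_S1 hn hk, ?_⟩
      · rw [dS_S1 hn, hd1]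
      · rw [hSR_S1 hn hk, hb, if_pos hd1]
    · by_cases hk1 : k = 1
      · refine ⟨S2 n d, WFS_S2, SRred_S2, nS_S2 hd hdn, dS_S2, ?_, ?_⟩
        · rw [kS_S2 hd hdn hn, hk1]
        · rw [hSR_S2 hd hdn hn, hb, if_neg hd1, if_pos hk1]
      · have hd2 : 2 ≤ d := by omega
        have hk2 : 2 ≤ k := by omega
        refine ⟨S3 n d k, WFS_S3 hn hdn, SRred_S3 hd hdn, nS_S3 hn,
          dS_S3 hn hd hdn, kS_S3 hn hd2 hk2, ?_⟩
        rw [hSR_S3 hn hd2 hk2 hdn, hb, if_neg hd1, if_neg hk1]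
  have hWit' : b ∈ {m | ∃ S, WFS S ∧ nS S = n ∧ dS S = d ∧ kS S = k ∧ hSR S = m} := by
    obtain ⟨S, h1, _, h3, h4, h5, h6⟩ := hWit
    exact ⟨S, h1, h3, h4, h5, h6⟩
  have hsubset : {m | ∃ S, WFS S ∧ SRred S ∧ nS S = n ∧ dS S = d ∧ kS S = k ∧
      hSR S = m} ⊆ {m | ∃ S, WFS S ∧ nS S = n ∧ dS S = d ∧ kS S = k ∧ hSR S = m} := by
    rintro m ⟨S, h1, _, h3, h4, h5, h6⟩
    exact ⟨S, h1, h3, h4, h5, h6⟩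
  have hmax : Hmax hSR n d k = b := by
    rw [Hmax]
    apply le_antisymm
    · exact csSup_le ⟨b, hWit'⟩ hUB
    · exact le_csSup ⟨b, hUB⟩ hWit'
  have hmaxR : HmaxR hSR SRred n d k = b := by
    rw [HmaxR]
    apply le_antisymm
    · exact csSup_le ⟨b, hWit⟩ (fun m hm => hUB m (hsubset hm))
    · exact le_csSup ⟨b, fun m hm => hUB m (hsubset hm)⟩ hWit
  exact ⟨by rw [hmax, hmaxR], hmax⟩
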